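/- arXiv:2302.14739 — 2 statements merged into one kernel-verified Lean document; each statement's English description precedes it below -/
import Mathlib

section
/- For every integer N ≥ 1, let U_N denote the set of N×N real matrices A with nonnegative entries such that every row sum and every column sum of A equals 1/N. Fix M ∈ ℝ^{N×N} and α > 0, and let T*_α be the unique minimizer over U_N of F(A) = Σ_{i,j} ( M_{ij} A_{ij} + α · A_{ij} log A_{ij} ) (with 0·log 0 = 0). Then every entry of T*_α is strictly positive, and there exist vectors u, v ∈ ℝ^N with strictly positive entries such that (T*_α)_{ij} = u_i · exp(−M_{ij}/α) · v_j for all i, j. -/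
/-!
If the minimizer `T` had a zero entry, moving from `T` a distance `t` towards the uniform
coupling would change that entry's entropy term by `α y t log t`, which for small `t` beats
the `O(t)` change of all other terms, since `t log t / t → -∞`; so `T > 0`. In the interior,
`T` is a critical point along the zero-margin directions `e_ij + e_kl - e_il - e_kj`, so the
gradient `M_ij + α (log T_ij + 1)` satisfies `g_ij + g_kl = g_il + g_kj`, i.e. it splits as
`a_i + b_j`; exponentiating gives the diagonal scaling.
-/

open scoped BigOperators

def UN (N : ℕ) : Set (Matrix (Fin N) (Fin N) ℝ) :=
  {A | (∀ i j, 0 ≤ A i j) ∧ (∀ i, ∑ j, A i j = 1 / N) ∧ (∀ j, ∑ i, A i j = 1 / N)}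

open Real Filter Topology

lemma exists_add_of_add_eq_add {ι κ : Type*} {g : ι → κ → ℝ}
    (h : ∀ i j k l, g i j + g k l = g i l + g k j) :
    ∃ (a : ι → ℝ) (b : κ → ℝ), ∀ i j, g i j = a i + b j := by
  rcases isEmpty_or_nonempty (ι × κ) with _ | ⟨i₀, j₀⟩
  · exact ⟨0, 0, fun i j => (IsEmpty.false (i, j)).elim⟩
  · exact ⟨fun i => g i j₀, fun j => g i₀ j - g i₀ j₀, fun i j => by linarith [h i j i₀ j₀]⟩

lemma mul_log_mul {t y : ℝ} (ht : t ≠ 0) :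
    t * y * log (t * y) = t * (y * log y) + y * (t * log t) := by
  rcases eq_or_ne y 0 with rfl | hy
  · simp
  · rw [log_mul ht hy]
    ring

section EntropicCost

variable {m n : Type*} [Fintype m] [Fintype n]

noncomputable def entropicCost (M : Matrix m n ℝ) (α : ℝ) (A : Matrix m n ℝ) : ℝ :=
  ∑ i, ∑ j, (M i j * A i j + α * (A i j * log (A i j)))

noncomputable def entropicCostGrad (M : Matrix m n ℝ) (α : ℝ) (A : Matrix m n ℝ) : Matrix m n ℝ :=
  Matrix.of fun i j => M i j + α * (log (A i j) + 1)

variable {M : Matrix m n ℝ} {α : ℝ}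

lemma entropicCost_segment_le {T Y : Matrix m n ℝ} {t : ℝ} {i₀ : m} {j₀ : n} (hα : 0 ≤ α)
    (hT : ∀ i j, 0 ≤ T i j) (hY : ∀ i j, 0 ≤ Y i j) (ht₀ : 0 < t) (ht₁ : t ≤ 1)
    (hzero : T i₀ j₀ = 0) :
    entropicCost M α ((1 - t) • T + t • Y) ≤
      (1 - t) * entropicCost M α T + t * entropicCost M α Y + α * Y i₀ j₀ * (t * log t) := by
  set φ : m → n → ℝ → ℝ := fun i j x => M i j * x + α * (x * log x)
  set gap : m → n → ℝ := fun i j =>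
    (1 - t) * φ i j (T i j) + t * φ i j (Y i j) - φ i j ((1 - t) * T i j + t * Y i j)
  have gap_nonneg : ∀ i j, 0 ≤ gap i j := fun i j => by
    have hconv := convexOn_mul_log.2 (Set.mem_Ici.2 (hT i j)) (Set.mem_Ici.2 (hY i j))
      (sub_nonneg.2 ht₁) ht₀.le (sub_add_cancel 1 t)
    simp only [smul_eq_mul] at hconv
    simp only [gap, φ]
    linear_combination mul_le_mul_of_nonneg_left hconv hα
  have gap_at_zero : gap i₀ j₀ = -(α * Y i₀ j₀ * (t * log t)) := by
    simp only [gap, φ, hzero, mul_zero, zero_add, zero_mul, mul_log_mul ht₀.ne']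
    ring
  have gap_le_sum : gap i₀ j₀ ≤ ∑ i, ∑ j, gap i j :=
    (Finset.single_le_sum (fun j _ => gap_nonneg i₀ j) (Finset.mem_univ j₀)).trans
      (Finset.single_le_sum (fun i _ => Finset.sum_nonneg fun j _ => gap_nonneg i j)
        (Finset.mem_univ i₀))
  have sum_gap : ∑ i, ∑ j, gap i j = (1 - t) * entropicCost M α T + t * entropicCost M α Y
      - entropicCost M α ((1 - t) • T + t • Y) := by
    simp only [entropicCost, Finset.mul_sum, ← Finset.sum_add_distrib, ← Finset.sum_sub_distrib]
    rfl
  linarith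

theorem pos_of_isMinOn_entropicCost {S : Set (Matrix m n ℝ)} (hS : Convex ℝ S)
    {Y T : Matrix m n ℝ} (hYS : Y ∈ S) (hY : ∀ i j, 0 < Y i j) (hTS : T ∈ S)
    (hT : ∀ i j, 0 ≤ T i j) (hα : 0 < α) (hmin : IsMinOn (entropicCost M α) S T) :
    ∀ i j, 0 < T i j := by
  intro i j
  refine (hT i j).lt_of_ne' fun hzero => ?_
  have hlog : Tendsto (fun t => α * Y i j * log t) (𝓝[>] 0) atBot :=
    tendsto_log_nhdsGT_zero.const_mul_atBot (mul_pos hα (hY i j))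
  obtain ⟨t, ht₀, ht₁, hsmall⟩ := (eventually_mem_nhdsWithin.and
    (((eventually_lt_nhds one_pos).filter_mono nhdsWithin_le_nhds).and
      (hlog.eventually (eventually_lt_atBot
        (entropicCost M α T - entropicCost M α Y))))).exists
  have hseg := entropicCost_segment_le (M := M) hα.le hT (fun i j => (hY i j).le)
    ht₀ ht₁.le hzero
  have hle := isMinOn_iff.1 hmin _ (hS hTS hYS (sub_nonneg.2 ht₁.le) ht₀.le (sub_add_cancel 1 t))
  have hscaled : t * (entropicCost M α T - entropicCost M α Y - α * Y i j * log t) ≤ 0 := by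
    linarith
  exact hscaled.not_gt (mul_pos ht₀ (by linarith))

lemma hasDerivAt_entropicCost_add_smul {T : Matrix m n ℝ} (hT : ∀ i j, T i j ≠ 0)
    (D : Matrix m n ℝ) :
    HasDerivAt (fun t : ℝ => entropicCost M α (T + t • D))
      (∑ i, ∑ j, D i j * entropicCostGrad M α T i j) 0 := by
  simp only [entropicCost, entropicCostGrad, Matrix.add_apply, Matrix.smul_apply, smul_eq_mul,
    Matrix.of_apply]
  refine HasDerivAt.fun_sum fun i _ => HasDerivAt.fun_sum fun j _ => ?_
  have hline : HasDerivAt (fun t : ℝ => T i j + t * D i j) (D i j) 0 := by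
    simpa using ((hasDerivAt_id (0 : ℝ)).mul_const (D i j)).const_add (T i j)
  have hterm : HasDerivAt (fun x => M i j * x + α * (x * log x))
      (M i j + α * (log (T i j) + 1)) (T i j) := by
    simpa using ((hasDerivAt_id (T i j)).const_mul (M i j)).fun_add
      ((hasDerivAt_mul_log (hT i j)).const_mul α)
  exact (hterm.comp_of_eq 0 hline (by simp)).congr_deriv (mul_comm _ _)

theorem sum_mul_entropicCostGrad_eq_zero {S : Set (Matrix m n ℝ)} {T D : Matrix m n ℝ}
    (hT : ∀ i j, T i j ≠ 0) (hmin : IsMinOn (entropicCost M α) S T)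
    (hD : ∀ᶠ t in 𝓝 (0 : ℝ), T + t • D ∈ S) :
    ∑ i, ∑ j, D i j * entropicCostGrad M α T i j = 0 := by
  refine IsLocalMin.hasDerivAt_eq_zero ?_ (hasDerivAt_entropicCost_add_smul hT D)
  filter_upwards [hD] with t ht
  simpa using isMinOn_iff.1 hmin _ ht

end EntropicCost

section Exchange

variable {m n : Type*} [DecidableEq m] [DecidableEq n]

def exchange (i : m) (j : n) (k : m) (l : n) : Matrix m n ℝ :=
  Matrix.single i j 1 + Matrix.single k l 1 - Matrix.single i l 1 - Matrix.single k j 1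

variable (i : m) (j : n) (k : m) (l : n)

lemma sum_exchange_row [Fintype n] (p : m) : ∑ q, exchange i j k l p q = 0 := by
  simp [exchange, Matrix.single_apply, Finset.sum_sub_distrib, Finset.sum_add_distrib, ite_and]

lemma sum_exchange_col [Fintype m] (q : n) : ∑ p, exchange i j k l p q = 0 := by
  simp [exchange, Matrix.single_apply, Finset.sum_sub_distrib, Finset.sum_add_distrib, ite_and]

lemma sum_exchange_mul [Fintype m] [Fintype n] (g : Matrix m n ℝ) :
    ∑ p, ∑ q, exchange i j k l p q * g p q = g i j + g k l - g i l - g k j := by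
  simp [exchange, Matrix.single_apply, sub_mul, add_mul, Finset.sum_sub_distrib,
    Finset.sum_add_distrib, ite_and]

end Exchange

section Coupling

variable {N : ℕ}

lemma convex_UN (N : ℕ) : Convex ℝ (UN N) := by
  intro A ⟨hA, hArow, hAcol⟩ B ⟨hB, hBrow, hBcol⟩ a b ha hb hab
  simp only [UN, Set.mem_ofPred_eq, Matrix.add_apply, Matrix.smul_apply, smul_eq_mul,
    Finset.sum_add_distrib, ← Finset.mul_sum, hArow, hBrow, hAcol, hBcol]
  refine ⟨fun i j => by positivity [hA i j, hB i j], fun _ => ?_, fun _ => ?_⟩ <;>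
    rw [← add_mul, hab, one_mul]

noncomputable def uniformCoupling (N : ℕ) : Matrix (Fin N) (Fin N) ℝ :=
  Matrix.of fun _ _ => ((N : ℝ) ^ 2)⁻¹

lemma uniformCoupling_mem_UN (N : ℕ) : uniformCoupling N ∈ UN N := by
  have hsum : ∑ _i : Fin N, ((N : ℝ) ^ 2)⁻¹ = 1 / N := by
    rcases eq_or_ne (N : ℝ) 0 with hN | hN
    · simp [hN]
    · simp only [Finset.sum_const, Finset.card_univ, Fintype.card_fin, nsmul_eq_mul]
      field_simp
  exact ⟨fun _ _ => inv_nonneg.2 (sq_nonneg (N : ℝ)), fun _ => hsum, fun _ => hsum⟩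

lemma uniformCoupling_pos (i j : Fin N) : 0 < uniformCoupling N i j :=
  inv_pos.2 (pow_pos (Nat.cast_pos.2 i.pos) 2)

lemma eventually_add_smul_mem_UN {T D : Matrix (Fin N) (Fin N) ℝ} (hTU : T ∈ UN N)
    (hT : ∀ i j, 0 < T i j) (hrow : ∀ i, ∑ j, D i j = 0) (hcol : ∀ j, ∑ i, D i j = 0) :
    ∀ᶠ t in 𝓝 (0 : ℝ), T + t • D ∈ UN N := by
  have hnonneg : ∀ i j, ∀ᶠ t in 𝓝 (0 : ℝ), 0 ≤ T i j + t * D i j := fun i j =>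
    ((continuous_const.add (continuous_id.mul continuous_const)).tendsto' 0 (T i j)
      (by simp)).eventually (lt_mem_nhds (hT i j)) |>.mono fun _ => le_of_lt
  filter_upwards [eventually_all.2 fun i => eventually_all.2 (hnonneg i)] with t ht
  simp only [UN, Set.mem_ofPred_eq, Matrix.add_apply, Matrix.smul_apply, smul_eq_mul,
    Finset.sum_add_distrib, ← Finset.mul_sum, hrow, hcol, hTU.2.1, hTU.2.2, mul_zero, add_zero]
  exact ⟨ht, fun _ => trivial, fun _ => trivial⟩

end Coupling

theorem stmt7_general (N : ℕ) (M : Matrix (Fin N) (Fin N) ℝ) (α : ℝ) (hα : 0 < α)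
    (T : Matrix (Fin N) (Fin N) ℝ) (hT : T ∈ UN N)
    (hmin : IsMinOn (fun A => ∑ i, ∑ j, (M i j * A i j + α * (A i j * Real.log (A i j))))
      (UN N) T) :
    (∀ i j, 0 < T i j) ∧
    ∃ u v : Fin N → ℝ, (∀ i, 0 < u i) ∧ (∀ j, 0 < v j) ∧
      ∀ i j, T i j = u i * Real.exp (-M i j / α) * v j := by
  have hpos : ∀ i j, 0 < T i j := pos_of_isMinOn_entropicCost (convex_UN N)
    (uniformCoupling_mem_UN N) uniformCoupling_pos hT hT.1 hα hmin
  refine ⟨hpos, ?_⟩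
  obtain ⟨a, b, hab⟩ := exists_add_of_add_eq_add (g := entropicCostGrad M α T) fun i j k l => by
    have hcrit := sum_mul_entropicCostGrad_eq_zero (fun i j => (hpos i j).ne') hmin
      (eventually_add_smul_mem_UN hT hpos (sum_exchange_row i j k l) (sum_exchange_col i j k l))
    rw [sum_exchange_mul] at hcrit
    linarith
  refine ⟨fun i => exp (a i / α), fun j => exp (b j / α - 1), fun _ => exp_pos _,
    fun _ => exp_pos _, fun i j => ?_⟩
  have hgrad : M i j + α * (log (T i j) + 1) = a i + b j := hab i j
  rw [← exp_add, ← exp_add, ← exp_log (hpos i j)]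
  congr 1
  field_simp
  linarith

/-- If `T` minimizes the entropy-regularized optimal transport objective
`F(A) = Σ_{i,j} (M_{ij} A_{ij} + α A_{ij} log A_{ij})` over `U_N`, then every entry of
`T` is strictly positive and there are vectors `u, v` with strictly positive entries
such that `T_{ij} = u_i exp(−M_{ij}/α) v_j` for all `i, j`. -/
theorem stmt7 (N : ℕ) (hN : 1 ≤ N) (M : Matrix (Fin N) (Fin N) ℝ) (α : ℝ) (hα : 0 < α)
    (T : Matrix (Fin N) (Fin N) ℝ) (hT : T ∈ UN N)
    (hmin : IsMinOn (fun A => ∑ i, ∑ j, (M i j * A i j + α * (A i j * Real.log (A i j))))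
      (UN N) T) :
    (∀ i j, 0 < T i j) ∧
    ∃ u v : Fin N → ℝ, (∀ i, 0 < u i) ∧ (∀ j, 0 < v j) ∧
      ∀ i j, T i j = u i * Real.exp (-M i j / α) * v j :=
  stmt7_general N M α hα T hT hmin
end

section
/- Let A and B be n×n real matrices such that A commutes with Aᵀ, D := B·Bᵀ commutes with both A and Aᵀ, and A + Aᵀ is invertible. Then for all real numbers s ≤ t, the matrix M(t, s) := ∫_s^t exp((t − τ)·A) · D · exp((t − τ)·Aᵀ) dτ equals D · ( exp((t − s)·(A + Aᵀ)) − I ) · (A + Aᵀ)^{−1}. -/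
/-!
Because `A` commutes with `Aᵀ` and `D = B Bᵀ` commutes with `A`, the integrand
collapses to `D exp((t - τ)(A + Aᵀ))`, which has the antiderivative
`τ ↦ -D exp((t - τ)(A + Aᵀ)) (A + Aᵀ)⁻¹`.
-/

open NormedSpace Matrix intervalIntegral

section BanachAlgebra

variable {𝔸 : Type*} [NormedRing 𝔸] [NormedAlgebra ℝ 𝔸] [CompleteSpace 𝔸]

theorem exp_smul_mul_mul_exp_smul {x y d : 𝔸} (hxy : Commute x y) (hdx : Commute d x) (c : ℝ) :
    exp (c • x) * d * exp (c • y) = d * exp (c • (x + y)) := by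
  -- `exp_add_of_commute` is stated for `ℚ`-algebras
  let : NormedAlgebra ℚ 𝔸 := NormedAlgebra.restrictScalars ℚ ℝ 𝔸
  rw [((hdx.smul_right c).exp_right).symm.eq, mul_assoc, smul_add,
    exp_add_of_commute ((hxy.smul_left c).smul_right c)]

theorem hasDerivAt_exp_sub_smul (x : 𝔸) (t τ : ℝ) :
    HasDerivAt (fun τ : ℝ => exp ((t - τ) • x)) (-(exp ((t - τ) • x) * x)) τ := by
  have := (hasDerivAt_exp_smul_const x (t - τ)).scomp τ ((hasDerivAt_id τ).const_sub t)
  rwa [neg_one_smul] at this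

theorem integral_mul_exp_sub_smul (d : 𝔸) {x x' : 𝔸} (hx : x * x' = 1) (s t : ℝ) :
    ∫ τ in s..t, d * exp ((t - τ) • x) = d * (exp ((t - s) • x) - 1) * x' := by
  have hderiv : ∀ τ, HasDerivAt (fun τ : ℝ => -(d * exp ((t - τ) • x) * x'))
      (d * exp ((t - τ) • x)) τ := fun τ => by
    refine (((hasDerivAt_exp_sub_smul x t τ).const_mul d).mul_const x').neg.congr_deriv ?_
    rw [mul_neg, neg_mul, neg_neg, mul_assoc, mul_assoc, hx, mul_one]
  have hcont : Continuous fun τ : ℝ => d * exp ((t - τ) • x) := continuous_iff_continuousAt.2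
    fun τ => ((hasDerivAt_exp_sub_smul x t τ).const_mul d).continuousAt
  rw [integral_eq_sub_of_hasDerivAt (fun τ _ => hderiv τ) (hcont.intervalIntegrable s t)]
  simp only [sub_self, zero_smul, exp_zero]
  noncomm_ring

end BanachAlgebra

attribute [local instance] Matrix.linftyOpNormedAddCommGroup Matrix.linftyOpNormedSpace
  Matrix.linftyOpNormedRing Matrix.linftyOpNormedAlgebra

theorem Matrix.intervalIntegral_apply {m n : Type*} [Fintype m] [Fintype n]
    {f : ℝ → Matrix m n ℝ} {a b : ℝ} (hf : Continuous f) (i : m) (j : n) :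
    (∫ τ in a..b, f τ) i j = ∫ τ in a..b, f τ i j :=
  ((LinearMap.toContinuousLinearMap (entryLinearMap ℝ ℝ i j)).intervalIntegral_comp_comm
    (hf.intervalIntegrable (μ := MeasureTheory.volume) a b)).symm

theorem stmt12_general {n : ℕ} (A B : Matrix (Fin n) (Fin n) ℝ)
    (hAAT : A * Aᵀ = Aᵀ * A)
    (hDA : (B * Bᵀ) * A = A * (B * Bᵀ))
    (hinv : IsUnit (A + Aᵀ)) (s t : ℝ) :
    (Matrix.of fun i j => ∫ τ in s..t,
        (exp ((t - τ) • A) * (B * Bᵀ) * exp ((t - τ) • Aᵀ)) i j)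
      = (B * Bᵀ) * (exp ((t - s) • (A + Aᵀ)) - 1) * (A + Aᵀ)⁻¹ := by
  have hintegrand : (fun τ : ℝ => exp ((t - τ) • A) * (B * Bᵀ) * exp ((t - τ) • Aᵀ))
      = fun τ => B * Bᵀ * exp ((t - τ) • (A + Aᵀ)) :=
    funext fun τ => exp_smul_mul_mul_exp_smul hAAT hDA (t - τ)
  have hcont : Continuous fun τ : ℝ => B * Bᵀ * exp ((t - τ) • (A + Aᵀ)) := by fun_prop
  have hinv' : (A + Aᵀ) * (A + Aᵀ)⁻¹ = 1 :=
    mul_nonsing_inv _ ((isUnit_iff_isUnit_det _).mp hinv)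
  ext i j
  rw [of_apply, ← intervalIntegral_apply (hintegrand ▸ hcont), hintegrand]
  exact congrFun₂ (integral_mul_exp_sub_smul _ hinv' s t) i j

/-- If `A` commutes with `Aᵀ`, `D := B·Bᵀ` commutes with both `A` and `Aᵀ`, and `A + Aᵀ`
is invertible, then for all reals `s ≤ t`, the Gramian
`M(t, s) = ∫_s^t exp((t − τ)·A)·D·exp((t − τ)·Aᵀ) dτ` (entrywise integral) equals
`D·(exp((t − s)·(A + Aᵀ)) − I)·(A + Aᵀ)⁻¹`. -/
theorem stmt12 {n : ℕ} (A B : Matrix (Fin n) (Fin n) ℝ)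
    (hAAT : A * Aᵀ = Aᵀ * A)
    (hDA : (B * Bᵀ) * A = A * (B * Bᵀ))
    (hDAT : (B * Bᵀ) * Aᵀ = Aᵀ * (B * Bᵀ))
    (hinv : IsUnit (A + Aᵀ)) (s t : ℝ) (hst : s ≤ t) :
    (Matrix.of fun i j => ∫ τ in s..t,
        (exp ((t - τ) • A) * (B * Bᵀ) * exp ((t - τ) • Aᵀ)) i j)
      = (B * Bᵀ) * (exp ((t - s) • (A + Aᵀ)) - 1) * (A + Aᵀ)⁻¹ :=
  stmt12_general A B hAAT hDA hinv s t
end
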